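/- Let G : ℝ^d → M_d(ℝ) be a symmetric-matrix-valued function with C_G^{-1}|ξ|² ≤ ⟨G(x)ξ, ξ⟩ ≤ C_G|ξ|² for all x, ξ, let w : ℝ^d → ℝ with C_w^{-1} ≤ w ≤ C_w, and let a : ℝ^d → ℝ be bounded and nonnegative. For z in the upper half-plane with arg(z) ∈ [π/6, 5π/6], let θ_z = arg(−iz) ∈ [−π/3, π/3]. Then there exists c₀ > 0 (depending only on C_G, C_w) such that for all u ∈ H¹(ℝ^d): Re ⟨e^{−iθ_z} P(z)u, u⟩ ≥ c₀ |z|² ‖u‖²_{H¹_z}, where P(z)u = −div(G∇u) − i z a w u − z² w u, the pairing is the H^{−1}, H¹ duality pairing, and ‖u‖²_{H¹_z} = |z|^{−2}‖∇u‖²_{L²} + ‖u‖²_{L²} (scaled so that ‖u‖_{H¹_z}² ≤ |z|^{−2}(‖∇u‖² + |z|²‖u‖²)). -/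

import Mathlib

open MeasureTheory Complex

/-- The `j`-th partial derivative of a function on `ℝ^d`. -/
noncomputable def partialDeriv (d : ℕ) (j : Fin d)
    (u : EuclideanSpace ℝ (Fin d) → ℂ) : EuclideanSpace ℝ (Fin d) → ℂ :=
  fun x => fderiv ℝ u x (EuclideanSpace.single j 1)

/-- For `t ∈ [π/6, 5π/6]`, `sin t ≥ 1/2`. -/
lemma sin_ge_half_of_mem (t : ℝ) (ht : t ∈ Set.Icc (Real.pi / 6) (5 * Real.pi / 6)) :
    (1 : ℝ) / 2 ≤ Real.sin t := by
  obtain ⟨h1, h2⟩ := ht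
  have hpi := Real.pi_pos
  have key : Real.cos (Real.pi / 3) ≤ Real.cos |Real.pi / 2 - t| := by
    apply Real.cos_le_cos_of_nonneg_of_le_pi (abs_nonneg _)
    · linarith
    · rw [abs_le]; constructor <;> linarith
  rw [Real.cos_abs, Real.cos_pi_div_two_sub, Real.cos_pi_div_three] at key
  exact key

set_option maxHeartbeats 1000000 in
/-- Coercivity of `e^{-iθ_z} P(z)` for `z` in the sector `arg z ∈ [π/6, 5π/6]`:
`Re ⟨e^{-iθ_z} P(z)u, u⟩ ≥ c₀ |z|² ‖u‖²_{H¹_z}` with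
`⟨P(z)u, u⟩ = ⟨G∇u,∇u⟩_{L²} - iz⟨awu,u⟩_{L²} - z²⟨wu,u⟩_{L²}`,
`θ_z = arg(-iz)` and `|z|² ‖u‖²_{H¹_z} = ‖∇u‖²_{L²} + |z|² ‖u‖²_{L²}`. -/
theorem stmt_7 (d : ℕ) (CG Cw : ℝ) (hCG : 1 ≤ CG) (hCw : 1 ≤ Cw)
    (G : EuclideanSpace ℝ (Fin d) → Matrix (Fin d) (Fin d) ℝ)
    (hGsym : ∀ x, (G x).IsSymm)
    (hGlow : ∀ x (ξ : Fin d → ℝ),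
      CG⁻¹ * (∑ i, ξ i ^ 2) ≤ ∑ i, ∑ k, G x i k * ξ i * ξ k)
    (hGhigh : ∀ x (ξ : Fin d → ℝ),
      ∑ i, ∑ k, G x i k * ξ i * ξ k ≤ CG * ∑ i, ξ i ^ 2)
    (w a : EuclideanSpace ℝ (Fin d) → ℝ)
    (hw : ∀ x, Cw⁻¹ ≤ w x ∧ w x ≤ Cw)
    (ha : ∀ x, 0 ≤ a x) (habd : ∃ M, ∀ x, a x ≤ M) :
    ∃ c₀ > (0 : ℝ), ∀ z : ℂ, 0 < z.im →
      z.arg ∈ Set.Icc (Real.pi / 6) (5 * Real.pi / 6) →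
      ∀ u : EuclideanSpace ℝ (Fin d) → ℂ, Differentiable ℝ u →
      Integrable (fun x => ∑ i, ∑ k, (G x i k : ℂ) * partialDeriv d i u x *
        (starRingEnd ℂ) (partialDeriv d k u x)) volume →
      Integrable (fun x => a x * w x * ‖u x‖ ^ 2) volume →
      Integrable (fun x => w x * ‖u x‖ ^ 2) volume →
      Integrable (fun x => ∑ j, ‖partialDeriv d j u x‖ ^ 2) volume →
      Integrable (fun x => ‖u x‖ ^ 2) volume →
      c₀ * ((∫ x, ∑ j, ‖partialDeriv d j u x‖ ^ 2)
          + ‖z‖ ^ 2 * ∫ x, ‖u x‖ ^ 2)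
        ≤ (Complex.exp (-Complex.I * ((Complex.arg (-Complex.I * z) : ℝ) : ℂ)) *
            ((∫ x, ∑ i, ∑ k, (G x i k : ℂ) * partialDeriv d i u x *
                (starRingEnd ℂ) (partialDeriv d k u x))
              - Complex.I * z * ((∫ x, a x * w x * ‖u x‖ ^ 2 : ℝ) : ℂ)
              - z ^ 2 * ((∫ x, w x * ‖u x‖ ^ 2 : ℝ) : ℂ))).re := by
  have hCG0 : (0 : ℝ) < CG := lt_of_lt_of_le one_pos hCG
  have hCw0 : (0 : ℝ) < Cw := lt_of_lt_of_le one_pos hCw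
  refine ⟨(2 * CG * Cw)⁻¹, by positivity, ?_⟩
  intro z hzim hargz u hu hA hB hC hI1 hI2
  set θ : ℝ := Complex.arg (-Complex.I * z) with hθdef
  set r : ℝ := ‖z‖ with hrdef
  have hz0 : z ≠ 0 := fun h => by simp [h] at hzim
  have hr0 : (0 : ℝ) < r := norm_pos_iff.mpr hz0
  -- cos θ ≥ 1/2
  have hsin : (1 : ℝ) / 2 ≤ Real.sin z.arg := sin_ge_half_of_mem _ hargz
  have him : r / 2 ≤ z.im := by
    have h := Complex.sin_arg z
    have : r * (1 / 2) ≤ r * Real.sin z.arg :=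
      mul_le_mul_of_nonneg_left hsin hr0.le
    rw [h, ← hrdef, mul_div_cancel₀ _ hr0.ne'] at this
    linarith
  have hne : -Complex.I * z ≠ 0 := by
    simp [hz0, Complex.I_ne_zero]
  have habs' : ‖-Complex.I * z‖ = r := by
    simp [hrdef]
  have hcos : (1 : ℝ) / 2 ≤ Real.cos θ := by
    rw [hθdef, Complex.cos_arg hne, habs']
    have hre : (-Complex.I * z).re = z.im := by simp
    rw [hre, le_div_iff₀ hr0]
    linarith
  -- notation for the three integrals
  set P : Fin d → EuclideanSpace ℝ (Fin d) → ℂ := fun j => partialDeriv d j u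
  set A : ℂ := ∫ x, ∑ i, ∑ k, (G x i k : ℂ) * P i x * (starRingEnd ℂ) (P k x) with hAdef
  set B : ℝ := ∫ x, a x * w x * ‖u x‖ ^ 2 with hBdef
  set C : ℝ := ∫ x, w x * ‖u x‖ ^ 2 with hCdef
  set I₁ : ℝ := ∫ x, ∑ j, ‖P j x‖ ^ 2 with hI1def
  set I₂ : ℝ := ∫ x, ‖u x‖ ^ 2 with hI2def
  -- pointwise real part lower bound
  have hptre : ∀ x, CG⁻¹ * (∑ j, ‖P j x‖ ^ 2)
      ≤ (∑ i, ∑ k, (G x i k : ℂ) * P i x * (starRingEnd ℂ) (P k x)).re := by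
    intro x
    have hre : (∑ i, ∑ k, (G x i k : ℂ) * P i x * (starRingEnd ℂ) (P k x)).re
        = (∑ i, ∑ k, G x i k * (P i x).re * (P k x).re)
          + (∑ i, ∑ k, G x i k * (P i x).im * (P k x).im) := by
      rw [Complex.re_sum, ← Finset.sum_add_distrib]
      refine Finset.sum_congr rfl fun i _ => ?_
      rw [Complex.re_sum, ← Finset.sum_add_distrib]
      refine Finset.sum_congr rfl fun k _ => ?_
      simp only [Complex.mul_re, Complex.mul_im, Complex.ofReal_re, Complex.ofReal_im,
        Complex.conj_re, Complex.conj_im]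
      ring
    rw [hre]
    have h1 := hGlow x (fun j => (P j x).re)
    have h2 := hGlow x (fun j => (P j x).im)
    have hnorm : ∀ j : Fin d, ‖P j x‖ ^ 2 = (P j x).re ^ 2 + (P j x).im ^ 2 := by
      intro j
      rw [Complex.sq_norm, Complex.normSq_apply]
      ring
    have hsum : (∑ j, ‖P j x‖ ^ 2)
        = (∑ j, (P j x).re ^ 2) + (∑ j, (P j x).im ^ 2) := by
      rw [← Finset.sum_add_distrib]
      exact Finset.sum_congr rfl fun j _ => hnorm j
    rw [hsum, mul_add]
    exact add_le_add h1 h2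
  -- pointwise imaginary part vanishes
  have hptim : ∀ x, (∑ i, ∑ k, (G x i k : ℂ) * P i x * (starRingEnd ℂ) (P k x)).im = 0 := by
    intro x
    have him' : (∑ i, ∑ k, (G x i k : ℂ) * P i x * (starRingEnd ℂ) (P k x)).im
        = ∑ i, ∑ k, G x i k * ((P i x).im * (P k x).re - (P i x).re * (P k x).im) := by
      rw [Complex.im_sum]
      refine Finset.sum_congr rfl fun i _ => ?_
      rw [Complex.im_sum]
      refine Finset.sum_congr rfl fun k _ => ?_
      simp only [Complex.mul_re, Complex.mul_im, Complex.ofReal_re, Complex.ofReal_im,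
        Complex.conj_re, Complex.conj_im]
      ring
    rw [him']
    have hswap : (∑ i, ∑ k, G x i k * ((P i x).im * (P k x).re - (P i x).re * (P k x).im))
        = ∑ i, ∑ k, G x i k * ((P k x).im * (P i x).re - (P k x).re * (P i x).im) := by
      rw [Finset.sum_comm]
      refine Finset.sum_congr rfl fun i _ => Finset.sum_congr rfl fun k _ => ?_
      rw [(hGsym x).apply i k]
    have : (∑ i, ∑ k, G x i k * ((P i x).im * (P k x).re - (P i x).re * (P k x).im))
        = -(∑ i, ∑ k, G x i k * ((P i x).im * (P k x).re - (P i x).re * (P k x).im)) := by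
      nth_rewrite 1 [hswap]
      rw [← Finset.sum_neg_distrib]
      refine Finset.sum_congr rfl fun i _ => ?_
      rw [← Finset.sum_neg_distrib]
      refine Finset.sum_congr rfl fun k _ => ?_
      ring
    linarith
  -- consequences for the integrals
  have hAim : A.im = 0 := by
    have h := integral_im (μ := volume) hA
    simp only [RCLike.im_to_complex] at h
    rw [hAdef, ← h]
    exact integral_eq_zero_of_ae (Filter.Eventually.of_forall fun x => hptim x)
  have hAre : CG⁻¹ * I₁ ≤ A.re := by
    have h := integral_re (μ := volume) hA
    simp only [RCLike.re_to_complex] at h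
    rw [hAdef, ← h]
    calc CG⁻¹ * I₁ = ∫ x, CG⁻¹ * ∑ j, ‖P j x‖ ^ 2 := by
            rw [integral_const_mul]
      _ ≤ _ := integral_mono (hI1.const_mul _) hA.re (fun x => hptre x)
  have hI1nn : 0 ≤ I₁ :=
    integral_nonneg fun x => Finset.sum_nonneg fun j _ => sq_nonneg _
  have hI2nn : 0 ≤ I₂ := integral_nonneg fun x => sq_nonneg _
  have hBnn : 0 ≤ B := integral_nonneg fun x => by
    have hwx0 : 0 ≤ w x := le_trans (by positivity : (0:ℝ) ≤ Cw⁻¹) (hw x).1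
    exact mul_nonneg (mul_nonneg (ha x) hwx0) (sq_nonneg _)
  have hCge : Cw⁻¹ * I₂ ≤ C := by
    calc Cw⁻¹ * I₂ = ∫ x, Cw⁻¹ * ‖u x‖ ^ 2 := by rw [integral_const_mul]
      _ ≤ C := integral_mono (hI2.const_mul _) hC (fun x =>
          mul_le_mul_of_nonneg_right (hw x).1 (sq_nonneg _))
  have hAnn : 0 ≤ A.re := le_trans (mul_nonneg (inv_nonneg.2 hCG0.le) hI1nn) hAre
  have hCnn : 0 ≤ C := le_trans (mul_nonneg (inv_nonneg.2 hCw0.le) hI2nn) hCge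
  -- algebraic identity for the RHS
  have h1 : (-Complex.I * z) = (r : ℂ) * Complex.exp ((θ : ℂ) * Complex.I) := by
    conv_lhs => rw [← Complex.norm_mul_exp_arg_mul_I (-Complex.I * z)]
    rw [habs']
  have hexp1 : Complex.exp (-Complex.I * (θ : ℂ)) * Complex.exp ((θ : ℂ) * Complex.I) = 1 := by
    rw [← Complex.exp_add]
    rw [show -Complex.I * (θ : ℂ) + (θ : ℂ) * Complex.I = 0 by ring]
    exact Complex.exp_zero
  have e1 : Complex.exp (-Complex.I * (θ : ℂ)) * (-Complex.I * z) = (r : ℂ) := by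
    rw [h1, ← mul_assoc, mul_comm (Complex.exp _) ((r : ℂ)), mul_assoc, hexp1, mul_one]
  have e2 : Complex.exp (-Complex.I * (θ : ℂ)) * (-(z ^ 2))
      = (r : ℂ) ^ 2 * Complex.exp ((θ : ℂ) * Complex.I) := by
    have hz2 : -(z ^ 2) = (-Complex.I * z) ^ 2 := by
      linear_combination (-(z ^ 2)) * Complex.I_sq
    rw [hz2, h1, mul_pow]
    linear_combination (r:ℂ)^2 * Complex.exp ((θ:ℂ) * Complex.I) * hexp1
  have hsplit : Complex.exp (-Complex.I * (θ : ℂ)) *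
        (A - Complex.I * z * (B : ℂ) - z ^ 2 * (C : ℂ))
      = Complex.exp (-Complex.I * (θ : ℂ)) * A + (r : ℂ) * (B : ℂ)
        + (r : ℂ) ^ 2 * Complex.exp ((θ : ℂ) * Complex.I) * (C : ℂ) := by
    linear_combination ((B:ℝ):ℂ) * e1 + ((C:ℝ):ℂ) * e2
  have hexpre : (Complex.exp (-Complex.I * (θ : ℂ))).re = Real.cos θ := by
    rw [show -Complex.I * (θ : ℂ) = ((-θ : ℝ) : ℂ) * Complex.I by push_cast; ring]
    rw [Complex.exp_ofReal_mul_I_re, Real.cos_neg]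
  have hexpim : (Complex.exp (-Complex.I * (θ : ℂ))).im = -Real.sin θ := by
    rw [show -Complex.I * (θ : ℂ) = ((-θ : ℝ) : ℂ) * Complex.I by push_cast; ring]
    rw [Complex.exp_ofReal_mul_I_im, Real.sin_neg]
  have hexpre2 : (Complex.exp ((θ : ℂ) * Complex.I)).re = Real.cos θ :=
    Complex.exp_ofReal_mul_I_re θ
  have hRHS : (Complex.exp (-Complex.I * (θ : ℂ)) *
        (A - Complex.I * z * (B : ℂ) - z ^ 2 * (C : ℂ))).re
      = Real.cos θ * A.re + r * B + r ^ 2 * Real.cos θ * C := by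
    rw [hsplit]
    simp only [Complex.add_re, Complex.mul_re, Complex.mul_im, Complex.ofReal_re,
      Complex.ofReal_im, hexpre, hexpim, hexpre2, hAim, ← Complex.ofReal_pow]
    ring
  rw [hRHS]
  -- final inequality
  have hc1 : (2 * CG * Cw)⁻¹ * I₁ ≤ Real.cos θ * A.re := by
    have step1 : (2 * CG * Cw)⁻¹ * I₁ ≤ (2 * CG)⁻¹ * I₁ := by
      apply mul_le_mul_of_nonneg_right _ hI1nn
      apply inv_anti₀ (by positivity)
      nlinarith
    have step2 : (2 * CG)⁻¹ * I₁ ≤ (1 / 2) * A.re := by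
      have : (2 * CG)⁻¹ * I₁ = (1 / 2) * (CG⁻¹ * I₁) := by
        rw [mul_inv]; ring
      rw [this]
      linarith
    have step3 : (1 / 2) * A.re ≤ Real.cos θ * A.re :=
      mul_le_mul_of_nonneg_right (by linarith) hAnn
    linarith
  have hc2 : (2 * CG * Cw)⁻¹ * (r ^ 2 * I₂) ≤ r ^ 2 * Real.cos θ * C := by
    have step1 : (2 * CG * Cw)⁻¹ * (r ^ 2 * I₂) ≤ (2 * Cw)⁻¹ * (r ^ 2 * I₂) := by
      apply mul_le_mul_of_nonneg_right _ (mul_nonneg (sq_nonneg r) hI2nn)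
      apply inv_anti₀ (by positivity)
      nlinarith
    have step2 : (2 * Cw)⁻¹ * (r ^ 2 * I₂) ≤ (1 / 2) * (r ^ 2 * C) := by
      have h' : r ^ 2 * (Cw⁻¹ * I₂) ≤ r ^ 2 * C :=
        mul_le_mul_of_nonneg_left hCge (sq_nonneg r)
      have : (2 * Cw)⁻¹ * (r ^ 2 * I₂) = (1 / 2) * (r ^ 2 * (Cw⁻¹ * I₂)) := by
        rw [mul_inv]; ring
      rw [this]
      linarith
    have step3 : (1 / 2) * (r ^ 2 * C) ≤ r ^ 2 * Real.cos θ * C := by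
      have h' : (1/2) * C ≤ Real.cos θ * C := mul_le_mul_of_nonneg_right (by linarith) hCnn
      nlinarith [sq_nonneg r]
    linarith
  have hrB : 0 ≤ r * B := mul_nonneg hr0.le hBnn
  calc (2 * CG * Cw)⁻¹ * (I₁ + r ^ 2 * I₂)
      = (2 * CG * Cw)⁻¹ * I₁ + (2 * CG * Cw)⁻¹ * (r ^ 2 * I₂) := by ring
    _ ≤ Real.cos θ * A.re + r ^ 2 * Real.cos θ * C := add_le_add hc1 hc2
    _ ≤ Real.cos θ * A.re + r * B + r ^ 2 * Real.cos θ * C := by linarith
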